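/- arXiv:1111.5302 — 2 statements merged into one kernel-verified Lean document; each statement's English description precedes it below -/
import Mathlib

section
/- For every θ ∈ ℝ^N one has Σ_{i=1}^N f_i(θ)² = Σ_{i=1}^N ( N κ_i(θ) − κ_i(θ)² ), and consequently the Euclidean norm of f(θ) satisfies ‖f(θ)‖² ≤ N³/4 for all θ ∈ ℝ^N. -/
/-! With `C = Σ_j cos θ_j` and `S = Σ_j sin θ_j`, the pair `(κ_i, f_i)` is the vector `(C, S)`
rotated by `-θ_i`, so `f_i² + κ_i² = C² + S²` for every `i`, while `Σ_i κ_i = C² + S²` as well.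
Summing the first identity over `i` and substituting the second gives the identity; the bound
follows from `N κ - κ² ≤ N² / 4`. -/

open Real Finset

/-- The Kuramoto interaction vector field `f_i(θ) = Σ_j sin (θ_j - θ_i)`. -/
noncomputable def kuraF (N : ℕ) (θ : Fin N → ℝ) (i : Fin N) : ℝ :=
  ∑ j, Real.sin (θ j - θ i)

/-- `κ_i(θ) = Σ_j cos (θ_j - θ_i)`. -/
noncomputable def kappa (N : ℕ) (θ : Fin N → ℝ) (i : Fin N) : ℝ :=
  ∑ j, Real.cos (θ j - θ i)

section

variable {N : ℕ} (θ : Fin N → ℝ)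

lemma kuraF_eq (i : Fin N) :
    kuraF N θ i = (∑ j, sin (θ j)) * cos (θ i) - (∑ j, cos (θ j)) * sin (θ i) := by
  simp only [kuraF, sin_sub, sum_sub_distrib, sum_mul]

lemma kappa_eq (i : Fin N) :
    kappa N θ i = (∑ j, cos (θ j)) * cos (θ i) + (∑ j, sin (θ j)) * sin (θ i) := by
  simp only [kappa, cos_sub, sum_add_distrib, sum_mul]

lemma kuraF_sq_add_kappa_sq (i : Fin N) :
    kuraF N θ i ^ 2 + kappa N θ i ^ 2 = (∑ j, cos (θ j)) ^ 2 + (∑ j, sin (θ j)) ^ 2 := by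
  rw [kuraF_eq, kappa_eq]
  linear_combination ((∑ j, cos (θ j)) ^ 2 + (∑ j, sin (θ j)) ^ 2) * sin_sq_add_cos_sq (θ i)

lemma sum_kappa : ∑ i, kappa N θ i = (∑ j, cos (θ j)) ^ 2 + (∑ j, sin (θ j)) ^ 2 := by
  simp only [kappa_eq, sum_add_distrib, ← mul_sum, sq]

lemma sum_kuraF_sq :
    ∑ i, kuraF N θ i ^ 2 = ∑ i, ((N : ℝ) * kappa N θ i - kappa N θ i ^ 2) := by
  have h : ∀ i, kuraF N θ i ^ 2 = (∑ j, kappa N θ j) - kappa N θ i ^ 2 := fun i => by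
    rw [sum_kappa, ← kuraF_sq_add_kappa_sq θ i, add_sub_cancel_right]
  simp only [h, sum_sub_distrib, sum_const, card_univ, Fintype.card_fin, nsmul_eq_mul, mul_sum]

end

lemma mul_sub_sq_le_sq_div_four (a x : ℝ) : a * x - x ^ 2 ≤ a ^ 2 / 4 := by
  nlinarith [four_mul_le_sq_add x (a - x)]

theorem stmt5_general (N : ℕ) (θ : Fin N → ℝ) :
    (∑ i, kuraF N θ i ^ 2 = ∑ i, ((N : ℝ) * kappa N θ i - kappa N θ i ^ 2)) ∧
    ∑ i, kuraF N θ i ^ 2 ≤ (N : ℝ) ^ 3 / 4 := by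
  refine ⟨sum_kuraF_sq θ, ?_⟩
  calc ∑ i, kuraF N θ i ^ 2 = ∑ i, ((N : ℝ) * kappa N θ i - kappa N θ i ^ 2) := sum_kuraF_sq θ
    _ ≤ ∑ _i : Fin N, (N : ℝ) ^ 2 / 4 := sum_le_sum fun i _ => mul_sub_sq_le_sq_div_four _ _
    _ = (N : ℝ) ^ 3 / 4 := by
      simp only [sum_const, card_univ, Fintype.card_fin, nsmul_eq_mul]
      ring

theorem stmt5 (N : ℕ) (hN : 2 ≤ N) (θ : Fin N → ℝ) :
    (∑ i, kuraF N θ i ^ 2 = ∑ i, ((N : ℝ) * kappa N θ i - kappa N θ i ^ 2)) ∧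
    ∑ i, kuraF N θ i ^ 2 ≤ (N : ℝ) ^ 3 / 4 :=
  stmt5_general N θ
end

section
/- For every θ in the cube [0, π/2]^N, the matrix J(θ) is negative semidefinite. -/
open Real Matrix Finset

/-- The Jacobian `J(θ)` of the Kuramoto vector field: `J_ij = cos (θ_i - θ_j)` off the
diagonal and `J_ii = -Σ_{k ≠ i} cos (θ_k - θ_i)`. -/
noncomputable def Jmat (N : ℕ) (θ : Fin N → ℝ) : Matrix (Fin N) (Fin N) ℝ :=
  Matrix.of fun i j =>
    if i = j then -∑ k ∈ Finset.univ \ {i}, Real.cos (θ k - θ i)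
    else Real.cos (θ i - θ j)

/-!
`-J(θ)` is the Laplacian `diag (∑ⱼ wᵢⱼ) - w` of the weighted complete graph with weights
`wᵢⱼ = cos (θᵢ - θⱼ)` (the loop weights `wᵢᵢ` cancel). Its quadratic form is
`½ ∑ᵢⱼ wᵢⱼ (xᵢ - xⱼ)²`, and on the cube `[0, π/2]^N` all differences `θᵢ - θⱼ` lie in
`[-π/2, π/2]`, so every weight is nonnegative.
-/

namespace Matrix

variable {ι R : Type*} [Fintype ι] [DecidableEq ι]

def weightedLaplacian [Ring R] (w : Matrix ι ι R) : Matrix ι ι R :=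
  diagonal (fun i => ∑ j, w i j) - w

theorem two_mul_dotProduct_weightedLaplacian_mulVec [CommRing R] {w : Matrix ι ι R}
    (hw : w.IsSymm) (x : ι → R) :
    2 * (x ⬝ᵥ weightedLaplacian w *ᵥ x) = ∑ i, ∑ j, w i j * (x i - x j) ^ 2 := by
  have hform : x ⬝ᵥ weightedLaplacian w *ᵥ x = ∑ i, ∑ j, w i j * (x i ^ 2 - x i * x j) := by
    rw [weightedLaplacian, sub_mulVec, dotProduct_sub]
    simp only [dotProduct, mulVec_diagonal]
    simp only [mulVec, dotProduct, mul_sum, sum_mul, ← sum_sub_distrib]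
    exact sum_congr rfl fun i _ => sum_congr rfl fun j _ => by ring
  have hswap : ∑ i, ∑ j, w i j * (x j ^ 2 - x j * x i) =
      ∑ i, ∑ j, w i j * (x i ^ 2 - x i * x j) := by
    rw [sum_comm]
    exact sum_congr rfl fun i _ => sum_congr rfl fun j _ => by rw [hw.apply i j]
  calc 2 * (x ⬝ᵥ weightedLaplacian w *ᵥ x)
      = ∑ i, ∑ j, w i j * (x i ^ 2 - x i * x j) + ∑ i, ∑ j, w i j * (x j ^ 2 - x j * x i) := by
        rw [hswap, hform, two_mul]
    _ = ∑ i, ∑ j, w i j * (x i - x j) ^ 2 := by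
        simp only [← sum_add_distrib]
        exact sum_congr rfl fun i _ => sum_congr rfl fun j _ => by ring

theorem posSemidef_weightedLaplacian [Field R] [LinearOrder R] [IsStrictOrderedRing R]
    [StarRing R] [TrivialStar R] {w : Matrix ι ι R} (hw : w.IsSymm) (hw₀ : ∀ i j, 0 ≤ w i j) :
    (weightedLaplacian w).PosSemidef := by
  refine .of_dotProduct_mulVec_nonneg ?_ fun x => ?_
  · rw [IsHermitian, conjTranspose_eq_transpose_of_trivial, weightedLaplacian, transpose_sub,
      diagonal_transpose, hw.eq]
  · rw [star_trivial, ← mul_nonneg_iff_of_pos_left two_pos,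
      two_mul_dotProduct_weightedLaplacian_mulVec hw]
    exact sum_nonneg fun i _ => sum_nonneg fun j _ => mul_nonneg (hw₀ i j) (sq_nonneg _)

end Matrix

theorem neg_Jmat_eq_weightedLaplacian (N : ℕ) (θ : Fin N → ℝ) :
    -Jmat N θ = weightedLaplacian (of fun i j => cos (θ i - θ j)) := by
  ext i j
  rcases eq_or_ne i j with rfl | hij
  · rw [weightedLaplacian, Matrix.sub_apply, diagonal_apply_eq, Matrix.neg_apply]
    simp only [Jmat, of_apply, if_true, neg_neg]
    rw [← sum_sdiff (subset_univ {i}), sum_singleton, sub_self, cos_zero, add_sub_cancel_right]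
    exact sum_congr rfl fun k _ => by rw [← cos_neg, neg_sub]
  · simp [Jmat, weightedLaplacian, hij]

theorem stmt8_general (N : ℕ) (θ : Fin N → ℝ)
    (hθ : ∀ i, θ i ∈ Set.Icc (0 : ℝ) (Real.pi / 2)) :
    (-(Jmat N θ)).PosSemidef := by
  rw [neg_Jmat_eq_weightedLaplacian]
  refine posSemidef_weightedLaplacian ?_ fun i j => ?_
  · exact IsSymm.ext fun i j => by simp only [of_apply, ← cos_neg (θ i - θ j), neg_sub]
  · obtain ⟨hi₀, hi₁⟩ := hθ i
    obtain ⟨hj₀, hj₁⟩ := hθ j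
    exact cos_nonneg_of_mem_Icc ⟨by linarith, by linarith⟩

/-- On the cube `[0, π/2]^N` the Jacobian is negative semidefinite, i.e. `-J(θ)` is
positive semidefinite. -/
theorem stmt8 (N : ℕ) (hN : 2 ≤ N) (θ : Fin N → ℝ)
    (hθ : ∀ i, θ i ∈ Set.Icc (0 : ℝ) (Real.pi / 2)) :
    (-(Jmat N θ)).PosSemidef :=
  stmt8_general N θ hθ
end
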